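/- For any digraph D on n vertices, γ⁺ₘ(D) = γ⁺(D) if and only if the maximum out-degree Δ⁺(D) equals n − 1. -/
import Mathlib


/-- Closed out-neighborhood `N⁺[S]` of a set `S` in the digraph with arc relation `A`. -/
noncomputable def closedOut {V : Type*} [Fintype V] [DecidableEq V]
    (A : V → V → Prop) (S : Finset V) : Finset V :=
  S ∪ @Finset.filter _ (fun v => ∃ u ∈ S, A u v) (Classical.decPred _) Finset.univ

/-- `S` is a majority out-dominating set: `|N⁺[S]| ≥ n/2`. -/
def IsMODS {V : Type*} [Fintype V] [DecidableEq V]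
    (A : V → V → Prop) (S : Finset V) : Prop :=
  2 * (closedOut A S).card ≥ Fintype.card V

/-- Set majority out-domination number `γ⁺ₘ`. -/
noncomputable def gammaM {V : Type*} [Fintype V] [DecidableEq V]
    (A : V → V → Prop) : ℕ :=
  sInf {k | ∃ S : Finset V, IsMODS A S ∧ S.card = k}

/-- Out-domination number `γ⁺`. -/
noncomputable def gammaPlus {V : Type*} [Fintype V] [DecidableEq V]
    (A : V → V → Prop) : ℕ :=
  sInf {k | ∃ S : Finset V, closedOut A S = Finset.univ ∧ S.card = k}

/-- Out-degree of a vertex. -/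
noncomputable def outDeg {V : Type*} [Fintype V] [DecidableEq V]
    (A : V → V → Prop) (v : V) : ℕ :=
  (@Finset.filter _ (fun w => A v w) (Classical.decPred _) Finset.univ).card

/-- Maximum out-degree `Δ⁺`. -/
noncomputable def DeltaPlus {V : Type*} [Fintype V] [DecidableEq V]
    (A : V → V → Prop) : ℕ :=
  Finset.univ.sup (outDeg A)



open Finset

lemma mem_closedOut {V : Type*} [Fintype V] [DecidableEq V]
    (A : V → V → Prop) (S : Finset V) (v : V) :
    v ∈ closedOut A S ↔ v ∈ S ∨ ∃ u ∈ S, A u v := by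
  classical
  simp [closedOut]

lemma subset_closedOut {V : Type*} [Fintype V] [DecidableEq V]
    (A : V → V → Prop) (S : Finset V) : S ⊆ closedOut A S := fun v hv =>
  (mem_closedOut A S v).2 (Or.inl hv)

lemma closedOut_union {V : Type*} [Fintype V] [DecidableEq V]
    (A : V → V → Prop) (S T : Finset V) :
    closedOut A (S ∪ T) = closedOut A S ∪ closedOut A T := by
  ext v
  simp only [mem_closedOut, mem_union]
  aesop

lemma closedOut_empty {V : Type*} [Fintype V] [DecidableEq V]
    (A : V → V → Prop) : closedOut A (∅ : Finset V) = ∅ := by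
  ext v; simp [mem_closedOut]

/-- `γ⁺ₘ(D) = γ⁺(D)` iff `Δ⁺(D) = n - 1`. -/
theorem stmt8 {V : Type*} [Fintype V] [DecidableEq V] [Nonempty V]
    (A : V → V → Prop) (hloop : ∀ v, ¬ A v v) :
    gammaM A = gammaPlus A ↔ DeltaPlus A = Fintype.card V - 1 := by
  classical
  set n := Fintype.card V with hn
  have hn1 : 1 ≤ n := Fintype.card_pos
  -- sets are nonempty
  have hdomne : {k | ∃ S : Finset V, closedOut A S = Finset.univ ∧ S.card = k}.Nonempty := by
    refine ⟨(univ : Finset V).card, univ, ?_, rfl⟩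
    exact univ_subset_iff.1 (subset_closedOut A univ)
  have hmodsne : {k | ∃ S : Finset V, IsMODS A S ∧ S.card = k}.Nonempty := by
    refine ⟨(univ : Finset V).card, univ, ?_, rfl⟩
    have : closedOut A univ = univ := univ_subset_iff.1 (subset_closedOut A univ)
    rw [IsMODS, this, card_univ]
    omega
  -- gammaM ≥ 1
  have hM1 : 1 ≤ gammaM A := by
    rw [Nat.one_le_iff_ne_zero]
    intro h0
    rcases (Nat.sInf_eq_zero.1 h0) with h | h
    · obtain ⟨S, hS, hc⟩ := h
      rw [card_eq_zero] at hc
      subst hc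
      rw [IsMODS, closedOut_empty, card_empty] at hS
      omega
    · exact absurd h (Set.nonempty_iff_ne_empty.1 hmodsne)
  -- gammaM ≤ gammaPlus
  have hMP : gammaM A ≤ gammaPlus A := by
    obtain ⟨S, hS, hc⟩ := Nat.sInf_mem hdomne
    refine Nat.sInf_le ⟨S, ?_, hc⟩
    rw [IsMODS, hS, card_univ]
    omega
  constructor
  · intro h
    -- take minimum dominating set
    obtain ⟨S, hS, hc0⟩ := Nat.sInf_mem hdomne
    set k := gammaPlus A with hk
    have hc : S.card = k := hc0
    have hk1 : 1 ≤ k := by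
      rw [← h]; exact hM1
    have hkone : k = 1 := by
      by_contra hne
      have hk2 : 2 ≤ k := by omega
      -- pick v ∈ S
      have hSne : S.Nonempty := card_pos.1 (by omega)
      obtain ⟨v, hv⟩ := hSne
      set T := S.erase v with hT
      have hins : S = {v} ∪ T := by
        rw [hT]
        ext w
        simp only [mem_union, mem_singleton, mem_erase]
        constructor
        · intro hw; by_cases hwv : w = v
          · exact Or.inl hwv
          · exact Or.inr ⟨hwv, hw⟩
        · rintro (rfl | ⟨_, hw⟩)
          · exact hv
          · exact hw
      have huniv : closedOut A {v} ∪ closedOut A T = univ := by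
        rw [← closedOut_union, ← hins, hS]
      have hTc : T.card = k - 1 := by
        rw [hT, card_erase_of_mem hv, hc]
      by_cases hcase : n ≤ 2 * (closedOut A T).card
      · -- T is a MODS of size k-1
        have : gammaM A ≤ k - 1 := Nat.sInf_le ⟨T, hcase, hTc⟩
        omega
      · -- {v} is a MODS
        push_neg at hcase
        have hcard : n ≤ (closedOut A {v}).card + (closedOut A T).card := by
          calc n = (univ : Finset V).card := rfl
            _ = (closedOut A {v} ∪ closedOut A T).card := by rw [huniv]
            _ ≤ _ := card_union_le _ _
        have hmods : IsMODS A {v} := by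
          rw [IsMODS]
          omega
        have : gammaM A ≤ 1 := Nat.sInf_le ⟨{v}, hmods, card_singleton v⟩
        omega
    -- k = 1: get dominating vertex
    rw [hkone] at hc
    obtain ⟨v, rfl⟩ := card_eq_one.1 hc
    have hfilt : (@Finset.filter _ (fun w => A v w) (Classical.decPred _) Finset.univ)
        = univ.erase v := by
      ext w
      simp only [mem_filter, mem_erase]
      constructor
      · rintro ⟨-, hA⟩
        refine ⟨fun hwv => ?_, mem_univ w⟩
        subst hwv; exact hloop w hA
      · rintro ⟨hwv, -⟩
        refine ⟨mem_univ w, ?_⟩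
        have := (mem_closedOut A {v} w).1 (hS ▸ mem_univ w)
        rcases this with hw | ⟨u, hu, hA⟩
        · simp at hw; exact absurd hw hwv
        · simp at hu; subst hu; exact hA
    have hdegv : outDeg A v = n - 1 := by
      rw [outDeg, hfilt, card_erase_of_mem (mem_univ v)]
      rfl
    have hub : DeltaPlus A ≤ n - 1 := by
      refine Finset.sup_le fun u _ => ?_
      rw [outDeg]
      have hsub : (@Finset.filter _ (fun w => A u w) (Classical.decPred _) Finset.univ)
          ⊆ univ.erase u := by
        intro w hw
        rw [mem_filter] at hw
        rw [mem_erase]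
        exact ⟨fun hwu => hloop u (hwu ▸ hw.2), mem_univ w⟩
      calc _ ≤ (univ.erase u).card := card_le_card hsub
        _ = n - 1 := by rw [card_erase_of_mem (mem_univ u)]; rfl
    have hlb : n - 1 ≤ DeltaPlus A := hdegv ▸ Finset.le_sup (mem_univ v)
    omega
  · intro h
    -- some vertex attains Δ⁺ = n - 1
    obtain ⟨v, -, hv⟩ := Finset.exists_mem_eq_sup univ univ_nonempty (outDeg A)
    have hdeg : outDeg A v = n - 1 := by rw [← hv, ← h]; rfl
    -- closedOut {v} = univ
    have hdomv : closedOut A {v} = univ := by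
      apply eq_univ_of_card
      have hvnot : v ∉ (@Finset.filter _ (fun w => A v w) (Classical.decPred _) Finset.univ) := by
        simp [hloop v]
      have hsub : {v} ∪ (@Finset.filter _ (fun w => A v w) (Classical.decPred _) Finset.univ)
          = closedOut A {v} := by
        rw [closedOut]
        congr 1
        ext w
        simp
      have : (closedOut A {v}).card = 1 + (n - 1) := by
        rw [← hsub, card_union_of_disjoint (by simpa using hvnot), card_singleton, ← hdeg, outDeg]
      rw [this]; omega
    have hP1 : gammaPlus A ≤ 1 := Nat.sInf_le ⟨{v}, hdomv, card_singleton v⟩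
    have hPM : 1 ≤ gammaM A := hM1
    omega
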